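/- For p = 0.25, q = 0.2, r = 0.3, the hybrid feedback strategy strictly outperforms the secret-key feedback strategy: Cin1(0.25,0.2,0.3) ⊊ Cin2(0.25,0.2,0.3). In particular, the point (R₁,R₂) = (0.35, 0.23) belongs to Cin2(0.25,0.2,0.3) but not to Cin1(0.25,0.2,0.3). -/

import Mathlib

/-- The binary entropy function to base 2, with the convention h(0)=h(1)=0
(automatic since `Real.logb 2 0 = 0`). -/
noncomputable def binEnt (x : ℝ) : ℝ := -x * Real.logb 2 x - (1 - x) * Real.logb 2 (1 - x)

/-- The binary convolution `a ⋆ b = a(1-b)+(1-a)b`. -/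
def binConv (a b : ℝ) : ℝ := a * (1 - b) + (1 - a) * b

/-- Non-feedback inner bound for the Dueck-type example with `Z₀ → Z₁ → Z₂`. -/
noncomputable def Cin (p q r : ℝ) : Set (ℝ × ℝ) :=
  {R : ℝ × ℝ | 0 ≤ R.1 ∧ R.1 ≤ 1 - binEnt q ∧ 0 ≤ R.2 ∧ R.2 ≤ 1 - binEnt (binConv r q)}

/-- Secret-key feedback inner bound for the Dueck-type example with `Z₀ → Z₁ → Z₂`. -/
noncomputable def Cin1 (p q r : ℝ) : Set (ℝ × ℝ) :=
  {R : ℝ × ℝ | 0 ≤ R.1 ∧ 0 ≤ R.2 ∧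
    R.1 ≤ 1 - binEnt (binConv r q) + binEnt r ∧
    R.2 ≤ 1 - binEnt (binConv r q) + binEnt r ∧
    R.1 ≤ 2 - binEnt p - binEnt q ∧
    R.2 ≤ 2 - binEnt p - binEnt (binConv r q) ∧
    R.1 + R.2 ≤ 3 - binEnt p - binEnt q - binEnt (binConv r q)}

/-- Hybrid feedback inner bound for the Dueck-type example with `Z₀ → Z₁ → Z₂`. -/
noncomputable def Cin2 (p q r : ℝ) : Set (ℝ × ℝ) :=
  {R : ℝ × ℝ | 0 ≤ R.1 ∧ 0 ≤ R.2 ∧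
    R.1 ≤ 1 + binEnt q - binEnt (binConv r q) + binEnt r ∧
    R.2 ≤ 1 + binEnt r ∧
    R.1 ≤ 2 - binEnt p - binEnt q ∧
    R.2 ≤ 2 - binEnt p - binEnt (binConv r q) ∧
    R.1 + R.2 ≤ 3 - binEnt p - binEnt q - binEnt r}

/-- Cut-set outer bound for the Dueck-type example with `Z₀ → Z₁ → Z₂`. -/
noncomputable def Cout (p q r : ℝ) : Set (ℝ × ℝ) :=
  {R : ℝ × ℝ | 0 ≤ R.1 ∧ 0 ≤ R.2 ∧
    R.1 ≤ 2 - binEnt p - binEnt q ∧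
    R.2 ≤ 2 - binEnt p - binEnt (binConv r q) ∧
    R.1 + R.2 ≤ 3 - binEnt p - binEnt q - binEnt r}

/-!
For `q, r ≤ 1/2` one has `r ≤ r ⋆ q ≤ 1/2`, so monotonicity of `h` on `[0, 1/2]` gives
`h(r) ≤ h(r ⋆ q)`; with `0 ≤ h`, every constraint of `Cin1` implies the matching one of
`Cin2`.

The strict gap is numerical. At a rational point, `(a + b) · h(a / (a + b))` is the base-2
logarithm of `(a + b)^(a + b) / (a^a b^b)`, so each bound on an integer combination of entropies
needed at `(0.35, 0.23)` is a comparison of an explicit rational number with a power of two.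
-/

open Real Set

theorem binEnt_eq_binEntropy_div_log_two (x : ℝ) : binEnt x = binEntropy x / log 2 := by
  simp only [binEnt, binEntropy, logb, log_inv]
  ring

theorem binEnt_nonneg {x : ℝ} (h₀ : 0 ≤ x) (h₁ : x ≤ 1) : 0 ≤ binEnt x := by
  rw [binEnt_eq_binEntropy_div_log_two]
  exact div_nonneg (binEntropy_nonneg h₀ h₁) (log_nonneg one_le_two)

theorem binEnt_le_one (x : ℝ) : binEnt x ≤ 1 := by
  rw [binEnt_eq_binEntropy_div_log_two, div_le_one (log_pos one_lt_two)]
  exact binEntropy_le_log_two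

theorem binEnt_strictMonoOn : StrictMonoOn binEnt (Icc 0 2⁻¹) := fun x hx y hy hxy => by
  simp only [binEnt_eq_binEntropy_div_log_two]
  exact div_lt_div_of_pos_right (binEntropy_strictMonoOn hx hy hxy) (log_pos one_lt_two)

theorem le_binConv {q r : ℝ} (hq : 0 ≤ q) (hr : r ≤ 2⁻¹) : r ≤ binConv r q := by
  unfold binConv; nlinarith

theorem binConv_le_two_inv {q r : ℝ} (hq : q ≤ 2⁻¹) (hr : r ≤ 2⁻¹) :
    binConv r q ≤ 2⁻¹ := by
  unfold binConv; nlinarith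

theorem binEnt_le_binEnt_binConv {q r : ℝ} (hq : q ∈ Icc 0 2⁻¹) (hr : r ∈ Icc 0 2⁻¹) :
    binEnt r ≤ binEnt (binConv r q) := by
  have hrq : r ≤ binConv r q := le_binConv hq.1 hr.2
  exact binEnt_strictMonoOn.monotoneOn hr ⟨hr.1.trans hrq, binConv_le_two_inv hq.2 hr.2⟩ hrq

theorem Cin1_subset_Cin2 (p : ℝ) {q r : ℝ} (hq : q ∈ Icc 0 2⁻¹) (hr : r ∈ Icc 0 2⁻¹) :
    Cin1 p q r ⊆ Cin2 p q r := by
  have hq0 : 0 ≤ binEnt q := binEnt_nonneg hq.1 (hq.2.trans (by norm_num))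
  have hrq := binEnt_le_binEnt_binConv hq hr
  have hrq0 : 0 ≤ binEnt (binConv r q) :=
    (binEnt_nonneg hr.1 (hr.2.trans (by norm_num))).trans hrq
  rintro R ⟨h₁, h₂, h₃, h₄, h₅, h₆, h₇⟩
  exact ⟨h₁, h₂, by linarith, by linarith, h₅, h₆, by linarith⟩

theorem mul_binEnt_div_add_eq_logb (a b : ℕ) (ha : 0 < a) (hb : 0 < b) :
    (a + b : ℝ) * binEnt (a / (a + b)) =
      logb 2 ((a + b : ℝ) ^ (a + b) / ((a : ℝ) ^ a * (b : ℝ) ^ b)) := by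
  have ha' : (0 : ℝ) < a := by exact_mod_cast ha
  have hb' : (0 : ℝ) < b := by exact_mod_cast hb
  have hn : (0 : ℝ) < a + b := by positivity
  have hsub : 1 - a / (a + b : ℝ) = b / (a + b) := by field_simp; ring
  rw [binEnt, hsub, logb_div ha'.ne' hn.ne', logb_div hb'.ne' hn.ne',
    logb_div (by positivity) (by positivity), logb_mul (by positivity) (by positivity),
    logb_pow, logb_pow, logb_pow]
  push_cast
  field_simp
  ring

theorem binEnt_one_fourth : binEnt (1 / 4) = logb 2 (4 ^ 4 / 3 ^ 3) / 4 := by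
  have h := mul_binEnt_div_add_eq_logb 1 3 one_pos (by norm_num)
  norm_num at h ⊢
  linarith

theorem binEnt_one_fifth : binEnt (1 / 5) = logb 2 (5 ^ 5 / 4 ^ 4) / 5 := by
  have h := mul_binEnt_div_add_eq_logb 1 4 one_pos (by norm_num)
  norm_num at h ⊢
  linarith

theorem binEnt_three_tenths : binEnt (3 / 10) = logb 2 (10 ^ 10 / (3 ^ 3 * 7 ^ 7)) / 10 := by
  have h := mul_binEnt_div_add_eq_logb 3 7 (by norm_num) (by norm_num)
  norm_num at h ⊢
  linarith

theorem binEnt_nineteen_fiftieths :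
    binEnt (19 / 50) = logb 2 (50 ^ 50 / (19 ^ 19 * 31 ^ 31)) / 50 := by
  have h := mul_binEnt_div_add_eq_logb 19 31 (by norm_num) (by norm_num)
  norm_num at h ⊢
  linarith

theorem two_fifths_le_binEnt_one_fifth : 2 / 5 ≤ binEnt (1 / 5) := by
  have key : 2 ≤ logb 2 (5 ^ 5 / 4 ^ 4 : ℝ) := by
    rw [le_logb_iff_rpow_le one_lt_two (by positivity)]; norm_num
  rw [binEnt_one_fifth]; linarith

theorem binEnt_one_fourth_add_binEnt_one_fifth_le :
    binEnt (1 / 4) + binEnt (1 / 5) ≤ 33 / 20 := by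
  have key : logb 2 ((4 ^ 4 / 3 ^ 3 : ℝ) ^ 5 * (5 ^ 5 / 4 ^ 4) ^ 4) ≤ 33 := by
    rw [logb_le_iff_le_rpow one_lt_two (by positivity)]; norm_num
  rw [logb_mul (by positivity) (by positivity), logb_pow, logb_pow] at key
  rw [binEnt_one_fourth, binEnt_one_fifth]; push_cast at key; linarith

theorem binEnt_one_fourth_add_binEnt_nineteen_fiftieths_le :
    binEnt (1 / 4) + binEnt (19 / 50) ≤ 177 / 100 := by
  have key : logb 2 ((4 ^ 4 / 3 ^ 3 : ℝ) ^ 25 * (50 ^ 50 / (19 ^ 19 * 31 ^ 31)) ^ 2) ≤ 177 := by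
    rw [logb_le_iff_le_rpow one_lt_two (by positivity)]; norm_num
  rw [logb_mul (by positivity) (by positivity), logb_pow, logb_pow] at key
  rw [binEnt_one_fourth, binEnt_nineteen_fiftieths]; push_cast at key; linarith

theorem binEnt_one_fourth_add_binEnt_one_fifth_add_binEnt_three_tenths_le :
    binEnt (1 / 4) + binEnt (1 / 5) + binEnt (3 / 10) ≤ 121 / 50 := by
  have key : logb 2 ((4 ^ 4 / 3 ^ 3 : ℝ) ^ 25 * (5 ^ 5 / 4 ^ 4) ^ 20 *
      (10 ^ 10 / (3 ^ 3 * 7 ^ 7)) ^ 10) ≤ 242 := by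
    rw [logb_le_iff_le_rpow one_lt_two (by positivity)]; norm_num
  rw [logb_mul (by positivity) (by positivity), logb_mul (by positivity) (by positivity),
    logb_pow, logb_pow, logb_pow] at key
  rw [binEnt_one_fourth, binEnt_one_fifth, binEnt_three_tenths]; push_cast at key; linarith

theorem lt_binEnt_one_fourth_add_binEnt_one_fifth_add_binEnt_nineteen_fiftieths :
    121 / 50 < binEnt (1 / 4) + binEnt (1 / 5) + binEnt (19 / 50) := by
  have key : 242 < logb 2 ((4 ^ 4 / 3 ^ 3 : ℝ) ^ 25 * (5 ^ 5 / 4 ^ 4) ^ 20 *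
      (50 ^ 50 / (19 ^ 19 * 31 ^ 31)) ^ 2) := by
    rw [lt_logb_iff_rpow_lt one_lt_two (by positivity)]; norm_num
  rw [logb_mul (by positivity) (by positivity), logb_mul (by positivity) (by positivity),
    logb_pow, logb_pow, logb_pow] at key
  rw [binEnt_one_fourth, binEnt_one_fifth, binEnt_nineteen_fiftieths]; push_cast at key; linarith

theorem binConv_three_tenths_one_fifth : binConv (3 / 10) (1 / 5) = 19 / 50 := by
  norm_num [binConv]

theorem mem_Cin2 : ((7 / 20, 23 / 100) : ℝ × ℝ) ∈ Cin2 (1 / 4) (1 / 5) (3 / 10) := by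
  simp only [Cin2, mem_ofPred_eq, binConv_three_tenths_one_fifth]
  have hr : 0 ≤ binEnt (3 / 10) := binEnt_nonneg (by norm_num) (by norm_num)
  refine ⟨by norm_num, by norm_num, ?_, by linarith, ?_, ?_, ?_⟩
  · linarith [two_fifths_le_binEnt_one_fifth, binEnt_le_one (19 / 50)]
  · linarith [binEnt_one_fourth_add_binEnt_one_fifth_le]
  · linarith [binEnt_one_fourth_add_binEnt_nineteen_fiftieths_le]
  · linarith [binEnt_one_fourth_add_binEnt_one_fifth_add_binEnt_three_tenths_le]

theorem notMem_Cin1 : ((7 / 20, 23 / 100) : ℝ × ℝ) ∉ Cin1 (1 / 4) (1 / 5) (3 / 10) := by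
  rintro ⟨-, -, -, -, -, -, h⟩
  rw [binConv_three_tenths_one_fifth] at h
  linarith [lt_binEnt_one_fourth_add_binEnt_one_fifth_add_binEnt_nineteen_fiftieths]

/-- For `p = 0.25`, `q = 0.2`, `r = 0.3`, the hybrid feedback strategy strictly
outperforms the secret-key feedback strategy; the point `(0.35, 0.23)` witnesses the gap. -/
theorem Cin1_ssubset_Cin2' :
    Cin1 0.25 0.2 0.3 ⊂ Cin2 0.25 0.2 0.3 ∧
    ((0.35, 0.23) : ℝ × ℝ) ∈ Cin2 0.25 0.2 0.3 ∧
    ((0.35, 0.23) : ℝ × ℝ) ∉ Cin1 0.25 0.2 0.3 := by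
  norm_num only
  have hsub : Cin1 (1 / 4) (1 / 5) (3 / 10) ⊆ Cin2 (1 / 4) (1 / 5) (3 / 10) :=
    Cin1_subset_Cin2 _ (by norm_num) (by norm_num)
  exact ⟨hsub.ssubset_of_not_subset fun h => notMem_Cin1 (h mem_Cin2), mem_Cin2, notMem_Cin1⟩
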